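/- Let v_1, …, v_n be unit vectors in ℝ^d (d ≥ 2) and c_1, …, c_n real numbers, and suppose the set K = ∩_{i=1}^n {x ∈ ℝ^d : ⟨v_i, x⟩ ≥ c_i} is nonempty. Then K is nearly bounded (lies between two parallel hyperplanes) if and only if the origin belongs to the convex hull of {v_1, …, v_n}. -/

import Mathlib

/-!
If `0 = ∑ wᵢ vᵢ` is a convex combination, then on `K` the nonnegative quantities
`wᵢ (⟪vᵢ, x⟫ - cᵢ)` sum to the constant `-∑ wᵢ cᵢ`, so `⟪vⱼ, ·⟫` is bounded on `K` for any `j`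
with `wⱼ > 0`. Conversely, if `0` is not in the convex hull, a separating vector `w` has
`⟪vᵢ, w⟫ ≥ ε > 0` for all `i`, so every `w + s • u` with `|s| ≤ ε` is a recession direction
of `K`; one of `w ± ε • u` has nonzero inner product with `u`, and the ray along it leaves
every slab orthogonal to `u`.
-/

open scoped RealInnerProductSpace

noncomputable section

/-- A set is nearly bounded if it lies between two parallel hyperplanes. -/
def NearlyBounded {d : ℕ} (S : Set (EuclideanSpace ℝ (Fin d))) : Prop :=
  ∃ u : EuclideanSpace ℝ (Fin d), ‖u‖ = 1 ∧ ∃ a b : ℝ,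
    a ≤ b ∧ ∀ x ∈ S, a ≤ ⟪u, x⟫ ∧ ⟪u, x⟫ ≤ b

open Set

section Halfspaces

variable {E ι : Type*} [NormedAddCommGroup E] [InnerProductSpace ℝ E]

lemma exists_forall_le_inner_of_zero_notMem_convexHull [Finite ι] [CompleteSpace E]
    (v : ι → E) (h0 : (0 : E) ∉ convexHull ℝ (range v)) :
    ∃ w : E, ∃ ε : ℝ, 0 < ε ∧ ∀ i, ε ≤ ⟪v i, w⟫ := by
  obtain ⟨f, r, hf, hr⟩ := geometric_hahn_banach_closed_point (convex_convexHull ℝ _)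
    ((finite_range v).isCompact_convexHull (𝕜 := ℝ)).isClosed h0
  rw [map_zero] at hr
  refine ⟨-(InnerProductSpace.toDual ℝ E).symm f, -r, neg_pos.2 hr, fun i => ?_⟩
  have hfi := hf _ (subset_convexHull ℝ _ (mem_range_self i))
  rw [inner_neg_right, real_inner_comm, InnerProductSpace.toDual_symm_apply]
  linarith

lemma inner_add_smul_nonneg {v u w : E} {ε t : ℝ} (hv : ‖v‖ ≤ 1) (hu : ‖u‖ ≤ 1)
    (hw : ε ≤ ⟪v, w⟫) (ht : |t| ≤ ε) : 0 ≤ ⟪v, w + t • u⟫ := by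
  have hvu : |⟪v, u⟫| ≤ 1 :=
    (abs_real_inner_le_norm v u).trans (mul_le_one₀ hv (norm_nonneg u) hu)
  have hprod : |t * ⟪v, u⟫| ≤ ε := by
    rw [abs_mul]
    nlinarith [abs_nonneg t, abs_nonneg ⟪v, u⟫]
  rw [inner_add_right, real_inner_smul_right]
  linarith [neg_abs_le (t * ⟪v, u⟫)]

lemma add_smul_mem_iInter_halfspaces {v : ι → E} {c : ι → ℝ} {x z : E}
    (hx : x ∈ ⋂ i, {y : E | c i ≤ ⟪v i, y⟫}) (hz : ∀ i, 0 ≤ ⟪v i, z⟫) {t : ℝ} (ht : 0 ≤ t) :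
    x + t • z ∈ ⋂ i, {y : E | c i ≤ ⟪v i, y⟫} := by
  simp only [mem_iInter, mem_ofPred_eq, inner_add_right, real_inner_smul_right] at hx ⊢
  exact fun i => le_add_of_le_of_nonneg (hx i) (mul_nonneg ht (hz i))

lemma exists_lt_inner_of_ray_subset {K : Set E} {x z u : E}
    (hray : ∀ t : ℝ, 0 ≤ t → x + t • z ∈ K) (hz : 0 < ⟪u, z⟫) (b : ℝ) :
    ∃ y ∈ K, b < ⟪u, y⟫ := by
  set t := (|b - ⟪u, x⟫| + 1) / ⟪u, z⟫
  have ht : 0 ≤ t := by positivity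
  refine ⟨x + t • z, hray t ht, ?_⟩
  rw [inner_add_right, real_inner_smul_right, div_mul_cancel₀ _ hz.ne']
  linarith [le_abs_self (b - ⟪u, x⟫)]

lemma zero_mem_convexHull_of_inner_bounded_on_iInter_halfspaces [Finite ι] [CompleteSpace E]
    {v : ι → E} (hv : ∀ i, ‖v i‖ ≤ 1) {c : ι → ℝ} {x₀ u : E}
    (hx₀ : x₀ ∈ ⋂ i, {y : E | c i ≤ ⟪v i, y⟫}) (hu : ‖u‖ = 1) {a b : ℝ}
    (hab : ∀ y ∈ ⋂ i, {y : E | c i ≤ ⟪v i, y⟫}, a ≤ ⟪u, y⟫ ∧ ⟪u, y⟫ ≤ b) :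
    (0 : E) ∈ convexHull ℝ (range v) := by
  by_contra h0
  obtain ⟨w, ε, hε, hw⟩ := exists_forall_le_inner_of_zero_notMem_convexHull v h0
  have hray : ∀ s, |s| ≤ ε → ∀ t : ℝ, 0 ≤ t →
      x₀ + t • (w + s • u) ∈ ⋂ i, {y : E | c i ≤ ⟪v i, y⟫} := fun s hs _ =>
    add_smul_mem_iInter_halfspaces hx₀
      fun i => inner_add_smul_nonneg (hv i) hu.le (hw i) hs
  have huu : ⟪u, u⟫ = 1 := by rw [real_inner_self_eq_norm_sq, hu, one_pow]
  have hεabs : |ε| ≤ ε := (abs_of_pos hε).le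
  rcases le_or_gt 0 ⟪u, w⟫ with hpos | hneg
  · obtain ⟨y, hy, hby⟩ := exists_lt_inner_of_ray_subset (u := u) (hray ε hεabs)
      (by rw [inner_add_right, real_inner_smul_right, huu]; linarith) b
    exact hby.not_ge (hab y hy).2
  · obtain ⟨y, hy, hay⟩ := exists_lt_inner_of_ray_subset (u := -u) (hray (-ε) (by rwa [abs_neg]))
      (by simp only [inner_neg_left, inner_add_right, real_inner_smul_right, huu]; linarith) (-a)
    rw [inner_neg_left] at hay
    linarith [(hab y hy).1]

lemma exists_inner_le_of_zero_mem_convexHull {v : ι → E}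
    (h0 : (0 : E) ∈ convexHull ℝ (range v)) (c : ι → ℝ) :
    ∃ j C, ∀ x ∈ ⋂ i, {y : E | c i ≤ ⟪v i, y⟫}, ⟪v j, x⟫ ≤ C := by
  rw [convexHull_range_eq_exists_affineCombination] at h0
  obtain ⟨s, w, hw0, hw1, hwv⟩ := h0
  rw [Finset.affineCombination_eq_linear_combination s v w hw1] at hwv
  obtain ⟨j, hjs, hj⟩ : ∃ j ∈ s, 0 < w j := by
    by_contra! hc
    linarith [Finset.sum_nonpos hc]
  refine ⟨j, c j + (-∑ i ∈ s, w i * c i) / w j, fun x hx => ?_⟩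
  have hx : ∀ i, c i ≤ ⟪v i, x⟫ := by simpa only [mem_iInter, mem_ofPred_eq] using hx
  have hslack : ∑ i ∈ s, w i * (⟪v i, x⟫ - c i) = -∑ i ∈ s, w i * c i := by
    have hsum : ∑ i ∈ s, w i * ⟪v i, x⟫ = 0 := by
      simp_rw [← real_inner_smul_left, ← sum_inner, hwv, inner_zero_left]
    simp only [mul_sub, Finset.sum_sub_distrib, hsum, zero_sub]
  have hj_le : w j * (⟪v j, x⟫ - c j) ≤ -∑ i ∈ s, w i * c i :=
    hslack ▸ Finset.single_le_sum (f := fun i => w i * (⟪v i, x⟫ - c i))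
      (fun i hi => mul_nonneg (hw0 i hi) (sub_nonneg.2 (hx i))) hjs
  linarith [(le_div_iff₀' hj).2 hj_le]

end Halfspaces

theorem nearlyBounded_iff_origin_mem_convexHull_general
    {d n : ℕ} (v : Fin n → EuclideanSpace ℝ (Fin d)) (hv : ∀ i, ‖v i‖ = 1)
    (c : Fin n → ℝ) (K : Set (EuclideanSpace ℝ (Fin d)))
    (hK : K = ⋂ i, {x : EuclideanSpace ℝ (Fin d) | c i ≤ ⟪v i, x⟫})
    (hne : K.Nonempty) :
    NearlyBounded K ↔ (0 : EuclideanSpace ℝ (Fin d)) ∈ convexHull ℝ (Set.range v) := by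
  subst hK
  obtain ⟨x₀, hx₀⟩ := hne
  constructor
  · rintro ⟨u, hu, a, b, -, hab⟩
    exact zero_mem_convexHull_of_inner_bounded_on_iInter_halfspaces (fun i => (hv i).le) hx₀ hu hab
  · intro h0
    obtain ⟨j, C, hC⟩ := exists_inner_le_of_zero_mem_convexHull h0 c
    have hj : ∀ x ∈ ⋂ i, {y : EuclideanSpace ℝ (Fin d) | c i ≤ ⟪v i, y⟫}, c j ≤ ⟪v j, x⟫ :=
      fun x hx => mem_iInter.1 hx j
    exact ⟨v j, hv j, c j, C, (hj x₀ hx₀).trans (hC x₀ hx₀), fun x hx => ⟨hj x hx, hC x hx⟩⟩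

/-- A nonempty intersection of closed halfspaces with unit inward normals `v i` is nearly
bounded if and only if the origin belongs to the convex hull of the `v i`. -/
theorem nearlyBounded_iff_origin_mem_convexHull
    {d n : ℕ} (hd : 2 ≤ d) (v : Fin n → EuclideanSpace ℝ (Fin d)) (hv : ∀ i, ‖v i‖ = 1)
    (c : Fin n → ℝ) (K : Set (EuclideanSpace ℝ (Fin d)))
    (hK : K = ⋂ i, {x : EuclideanSpace ℝ (Fin d) | c i ≤ ⟪v i, x⟫})
    (hne : K.Nonempty) :
    NearlyBounded K ↔ (0 : EuclideanSpace ℝ (Fin d)) ∈ convexHull ℝ (Set.range v) :=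
  nearlyBounded_iff_origin_mem_convexHull_general v hv c K hK hne
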